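/- (Johnson–Lindenstrauss lemma, Lemma 1.) There exists an absolute constant c > 0 with the following property: for every d ≥ 1, every finite set 𝒳 ⊂ ℝᵈ of cardinality p ≥ 1, every ε ∈ (0,1), and every integer m ≥ c · log p / ε², there exists a matrix S ∈ ℝ^{m×d} such that for all y, z ∈ 𝒳, (1 − ε) ‖y − z‖₂² ≤ ‖S(y − z)‖₂² ≤ (1 + ε) ‖y − z‖₂². -/

import Mathlib

open MeasureTheory ProbabilityTheory Real
open scoped NNReal ENNReal

noncomputable def stdGauss : Measure ℝ := gaussianReal 0 1

instance : IsProbabilityMeasure stdGauss := by unfold stdGauss; infer_instance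

lemma stdGauss_integral_eq (f : ℝ → ℝ) :
    ∫ x, f x ∂stdGauss = ∫ x, gaussianPDFReal 0 1 x * f x := by
  have hk : Measurable (fun x => Real.toNNReal (gaussianPDFReal 0 1 x)) :=
    (measurable_gaussianPDFReal 0 1).real_toNNReal
  rw [stdGauss, gaussianReal_of_var_ne_zero 0 one_ne_zero]
  have : gaussianPDF 0 1 = fun x => ((Real.toNNReal (gaussianPDFReal 0 1 x) : ℝ≥0) : ℝ≥0∞) := by
    ext x; simp [gaussianPDF, ENNReal.ofReal]
  rw [this, integral_withDensity_eq_integral_smul hk f]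
  congr 1; ext x
  simp [NNReal.smul_def, Real.coe_toNNReal _ (gaussianPDFReal_nonneg 0 1 x)]

lemma stdGauss_integrable_iff (f : ℝ → ℝ) :
    Integrable f stdGauss ↔ Integrable (fun x => gaussianPDFReal 0 1 x * f x) := by
  have hk : Measurable (fun x => Real.toNNReal (gaussianPDFReal 0 1 x)) :=
    (measurable_gaussianPDFReal 0 1).real_toNNReal
  rw [stdGauss, gaussianReal_of_var_ne_zero 0 one_ne_zero]
  have : gaussianPDF 0 1 = fun x => ((Real.toNNReal (gaussianPDFReal 0 1 x) : ℝ≥0) : ℝ≥0∞) := by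
    ext x; simp [gaussianPDF, ENNReal.ofReal]
  rw [this, integrable_withDensity_iff_integrable_smul hk]
  constructor <;> intro h <;> [skip; skip] <;>
  · refine h.congr ?_
    filter_upwards with x
    simp [NNReal.smul_def, Real.coe_toNNReal _ (gaussianPDFReal_nonneg 0 1 x)]

lemma sqrt_ratio {u v w : ℝ} (hu : 0 < u) (hv : 0 < v) (hw : 0 < w) :
    (Real.sqrt (u*v))⁻¹ * (Real.sqrt v / Real.sqrt w) = (Real.sqrt (u*w))⁻¹ := by
  rw [Real.sqrt_mul hu.le, Real.sqrt_mul hu.le, mul_inv, mul_inv]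
  have h1 : Real.sqrt v ≠ 0 := ne_of_gt (Real.sqrt_pos.mpr hv)
  field_simp
  

lemma gauss_quad (t b a : ℝ) (h : 2*t*b^2 < 1) :
    Integrable (fun x => rexp (t*(a+b*x)^2)) stdGauss ∧
    ∫ x, rexp (t*(a+b*x)^2) ∂stdGauss
      = rexp (t*a^2/(1-2*t*b^2)) / Real.sqrt (1-2*t*b^2) := by
  have hc : 0 < 1/2 - t*b^2 := by linarith
  have hq : (0:ℝ) < 1 - 2*t*b^2 := by linarith
  have key : (fun x => gaussianPDFReal 0 1 x * rexp (t*(a+b*x)^2))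
      = fun x => ((Real.sqrt (2*π))⁻¹ * rexp (t*a^2*(1 - 2*t*b^2)⁻¹))
          * rexp (-(1/2 - t*b^2) * (x - 2*t*a*b*(1 - 2*t*b^2)⁻¹)^2) := by
    ext x
    have pdf : gaussianPDFReal 0 1 x = (Real.sqrt (2*π))⁻¹ * rexp (-x^2/2) := by
      simp [gaussianPDFReal]
    rw [pdf, mul_assoc, ← Real.exp_add, mul_assoc, ← Real.exp_add]
    congr 2
    have hr : (1 - 2*t*b^2) * (1 - 2*t*b^2)⁻¹ = 1 := mul_inv_cancel₀ hq.ne'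
    linear_combination (-(t*a^2) - 2*t*a*b*x + 2*t^2*a^2*b^2*(1 - 2*t*b^2)⁻¹) * hr
  have hint : Integrable (fun x => ((Real.sqrt (2*π))⁻¹ * rexp (t*a^2*(1 - 2*t*b^2)⁻¹))
      * rexp (-(1/2 - t*b^2) * (x - 2*t*a*b*(1 - 2*t*b^2)⁻¹)^2)) := by
    exact ((integrable_exp_neg_mul_sq hc).comp_sub_right _).const_mul _
  constructor
  · rw [stdGauss_integrable_iff, key]; exact hint
  · rw [stdGauss_integral_eq, key]
    rw [integral_const_mul _ _]
    have : (∫ x : ℝ, rexp (-(1/2 - t*b^2) * (x - 2*t*a*b*(1 - 2*t*b^2)⁻¹)^2))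
        = Real.sqrt (π / (1/2 - t*b^2)) := by
      rw [integral_sub_right_eq_self (fun x => rexp (-(1/2 - t*b^2) * x^2)) _]
      exact integral_gaussian _
    rw [this]
    have hval : (Real.sqrt (2*π))⁻¹ * Real.sqrt (π / (1/2 - t*b^2))
        = (Real.sqrt (1 - 2*t*b^2))⁻¹ := by
      rw [Real.sqrt_div pi_pos.le, sqrt_ratio two_pos pi_pos hc]
      congr 2
      ring
    have hval2 : (Real.sqrt (2*π))⁻¹ * Real.sqrt (π * (1/2 - t*b^2)⁻¹)
        = (Real.sqrt (1 - 2*t*b^2))⁻¹ := by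
      rw [← div_eq_mul_inv π]; exact hval
    rw [div_eq_mul_inv (rexp _), ← hval2]
    ring

noncomputable def gaussPi (d : ℕ) : Measure (Fin d → ℝ) := Measure.pi fun _ => stdGauss
instance (d : ℕ) : IsProbabilityMeasure (gaussPi d) := by unfold gaussPi; infer_instance
instance (d : ℕ) : SigmaFinite (gaussPi d) := by infer_instance

lemma gauss_pi_quad : ∀ (d : ℕ) (t : ℝ) (u : Fin d → ℝ),
    2*t*(∑ j, u j^2) < 1 → ∀ a : ℝ,
    Integrable (fun x : Fin d → ℝ => rexp (t*(a + ∑ j, u j * x j)^2)) (gaussPi d) ∧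
    ∫ x, rexp (t*(a + ∑ j, u j * x j)^2) ∂(gaussPi d)
      = rexp (t*a^2/(1-2*t*(∑ j, u j^2))) / Real.sqrt (1-2*t*(∑ j, u j^2)) := by
  intro d
  induction d with
  | zero =>
      intro t u h a
      simp only [Finset.univ_eq_empty, Finset.sum_empty, add_zero]
      constructor
      · exact integrable_const _
      · rw [integral_const]
        simp
  | succ d ih =>
      intro t u h a
      have hS0 : (0:ℝ) ≤ ∑ j : Fin d, (u j.succ)^2 :=
        Finset.sum_nonneg fun j _ => sq_nonneg _
      have hsum : (∑ j : Fin (d+1), u j^2) = (u 0)^2 + ∑ j : Fin d, (u j.succ)^2 :=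
        Fin.sum_univ_succ _
      set S := ∑ j : Fin d, (u j.succ)^2 with hSdef
      have hQ : 0 < 1 - 2*t*((u 0)^2 + S) := by rw [hsum] at h; linarith
      have hS : 2*t*S < 1 := by
        rcases le_or_gt 0 t with h0 | h0
        · nlinarith [sq_nonneg (u 0)]
        · nlinarith
      have hq : (0:ℝ) < 1 - 2*t*S := by linarith
      set t' := t/(1-2*t*S) with ht'def
      have ht' : 2*t'*(u 0)^2 < 1 := by
        rw [ht'def]
        have hr : 2*(t/(1-2*t*S))*(u 0)^2 = (2*t*(u 0)^2)/(1-2*t*S) := by ring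
        rw [hr, div_lt_one hq]
        linarith
      have e1 : 1 - 2*t'*(u 0)^2 = (1 - 2*t*((u 0)^2 + S))/(1 - 2*t*S) := by
        rw [ht'def]
        field_simp
        ring
      have hq' : (0:ℝ) < 1 - 2*t'*(u 0)^2 := by
        rw [e1]; positivity
      have e2 : t'*a^2/(1 - 2*t'*(u 0)^2) = t*a^2/(1 - 2*t*((u 0)^2+S)) := by
        rw [e1, ht'def]
        field_simp
        have hq2 : (1 - t*2*S) ≠ 0 := (by linarith : (0:ℝ) < 1 - t*2*S).ne'
        have hQ' : (1 - t*2*((u 0)^2+S)) ≠ 0 := (by linarith : (0:ℝ) < 1 - t*2*((u 0)^2+S)).ne'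
        rw [div_eq_div_iff (mul_ne_zero hq2 hQ') hQ']
        ring
      have e3 : Real.sqrt (1-2*t'*(u 0)^2) * Real.sqrt (1-2*t*S)
          = Real.sqrt (1-2*t*((u 0)^2+S)) := by
        rw [e1, ← Real.sqrt_mul (by positivity), div_mul_cancel₀ _ hq.ne']
      -- the equivalence with the product space
      have he := measurePreserving_piFinSuccAbove (fun _ : Fin (d+1) => stdGauss) 0
      set e := MeasurableEquiv.piFinSuccAbove (fun _ : Fin (d+1) => ℝ) 0 with hedef
      set g : ℝ × (Fin d → ℝ) → ℝ :=
        fun p => rexp (t * ((a + u 0 * p.1) + ∑ j : Fin d, u j.succ * p.2 j)^2) with hgdef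
      have hex : ∀ x : Fin (d+1) → ℝ, e x = (x 0, fun j => x j.succ) := by
        intro x
        rw [hedef]
        ext
        · rfl
        · simp [MeasurableEquiv.piFinSuccAbove, Fin.insertNthEquiv, Fin.removeNth, Fin.tail,
            Fin.zero_succAbove]
      have hcomp : ∀ x : Fin (d+1) → ℝ,
          rexp (t*(a + ∑ j, u j * x j)^2) = g (e x) := by
        intro x
        rw [hex x, hgdef]
        congr 1
        rw [Fin.sum_univ_succ]
        ring
      have hgmeas : AEStronglyMeasurable g ((stdGauss).prod (gaussPi d)) := by
        apply Continuous.aestronglyMeasurable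
        apply Real.continuous_exp.comp
        fun_prop
      have hint_inner : ∀ x₀ : ℝ,
          Integrable (fun y : Fin d → ℝ =>
            rexp (t*((a + u 0 * x₀) + ∑ j : Fin d, u j.succ * y j)^2)) (gaussPi d) :=
        fun x₀ => (ih t (fun j => u j.succ) hS (a + u 0 * x₀)).1
      have hval_inner : ∀ x₀ : ℝ,
          (∫ y, rexp (t*((a + u 0 * x₀) + ∑ j : Fin d, u j.succ * y j)^2) ∂(gaussPi d))
            = rexp (t'*(a + u 0 * x₀)^2) / Real.sqrt (1-2*t*S) := by
        intro x₀
        have := (ih t (fun j => u j.succ) hS (a + u 0 * x₀)).2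
        rw [this, ht'def, div_mul_eq_mul_div]
      have hint_prod : Integrable g ((stdGauss).prod (gaussPi d)) := by
        rw [integrable_prod_iff hgmeas]
        constructor
        · exact ae_of_all _ fun x₀ => hint_inner x₀
        · have : (fun x₀ : ℝ => ∫ y, ‖g (x₀, y)‖ ∂(gaussPi d))
              = fun x₀ => rexp (t'*((a + u 0 * x₀))^2) / Real.sqrt (1-2*t*S) := by
            ext x₀
            rw [← hval_inner x₀]
            congr 1
            ext y
            rw [hgdef]
            exact Real.norm_of_nonneg (Real.exp_pos _).le
          rw [this]
          exact ((gauss_quad t' (u 0) a ht').1).div_const _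
      have hval_prod : ∫ p, g p ∂((stdGauss).prod (gaussPi d))
          = rexp (t*a^2/(1-2*t*((u 0)^2+S))) / Real.sqrt (1-2*t*((u 0)^2+S)) := by
        rw [integral_prod g hint_prod]
        have : (fun x₀ : ℝ => ∫ y, g (x₀, y) ∂(gaussPi d))
            = fun x₀ => rexp (t'*(a + u 0 * x₀)^2) / Real.sqrt (1-2*t*S) := by
          ext x₀
          exact hval_inner x₀
        rw [this]
        rw [integral_div]
        rw [(gauss_quad t' (u 0) a ht').2]
        rw [div_div, e3, e2]
      constructor
      · have : (fun x : Fin (d+1) → ℝ => rexp (t*(a + ∑ j, u j * x j)^2)) = fun x => g (e x) := by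
          ext x; exact hcomp x
        rw [this]
        have := (he.integrable_comp_emb e.measurableEmbedding (g := g)).mpr hint_prod
        exact this
      · have h1 : (∫ x, rexp (t*(a + ∑ j, u j * x j)^2) ∂(gaussPi (d+1)))
            = ∫ x, g (e x) ∂(gaussPi (d+1)) := by
          congr 1; ext x; exact hcomp x
        rw [h1]
        have h2 : ∫ x, g (e x) ∂(gaussPi (d+1)) = ∫ p, g p ∂((stdGauss).prod (gaussPi d)) :=
          he.integral_comp e.measurableEmbedding g
        rw [h2, hval_prod, hsum]

lemma pi_prod_integral {E : Type*} [MeasurableSpace E] (ν : Measure E) [IsProbabilityMeasure ν] :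
    ∀ (m : ℕ) (f : E → ℝ), Integrable f ν →
    Integrable (fun x : Fin m → E => ∏ i, f (x i)) (Measure.pi fun _ => ν) ∧
    ∫ x : Fin m → E, ∏ i, f (x i) ∂(Measure.pi fun _ => ν) = (∫ x, f x ∂ν)^m := by
  intro m
  induction m with
  | zero =>
      intro f hf
      constructor
      · simpa using integrable_const (1:ℝ)
      · simp
  | succ m ih =>
      intro f hf
      have he := measurePreserving_piFinSuccAbove (fun _ : Fin (m+1) => ν) 0
      set e := MeasurableEquiv.piFinSuccAbove (fun _ : Fin (m+1) => E) 0 with hedef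
      set g : E × (Fin m → E) → ℝ := fun p => f p.1 * ∏ i, f (p.2 i) with hgdef
      have hex : ∀ x : Fin (m+1) → E, e x = (x 0, fun j => x j.succ) := by
        intro x
        rw [hedef]
        ext
        · rfl
        · simp [MeasurableEquiv.piFinSuccAbove, Fin.insertNthEquiv, Fin.removeNth, Fin.tail,
            Fin.zero_succAbove]
      have hcomp : ∀ x : Fin (m+1) → E, (∏ i, f (x i)) = g (e x) := by
        intro x
        rw [hex x, hgdef, Fin.prod_univ_succ]
      have hg : Integrable g (ν.prod (Measure.pi fun _ : Fin m => ν)) :=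
        hf.mul_prod (ih f hf).1
      constructor
      · have hfun : (fun x : Fin (m+1) → E => ∏ i, f (x i)) = fun x => g (e x) :=
          funext hcomp
        rw [hfun]
        exact (he.integrable_comp_emb e.measurableEmbedding).mpr hg
      · have hfun : (∫ x : Fin (m+1) → E, ∏ i, f (x i) ∂(Measure.pi fun _ => ν))
            = ∫ x, g (e x) ∂(Measure.pi fun _ => ν) := by
          congr 1; ext x; exact hcomp x
        rw [hfun, he.integral_comp e.measurableEmbedding g]
        have h2 : ∫ y, g y ∂(ν.prod (Measure.pi fun _ : Fin m => ν))
            = (∫ x, f x ∂ν) * ∫ y : Fin m → E, ∏ i, f (y i) ∂(Measure.pi fun _ => ν) :=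
          integral_prod_mul f (fun y : Fin m → E => ∏ i, f (y i))
        rw [h2, (ih f hf).2, pow_succ]
        ring

noncomputable def gaussMat (m d : ℕ) : Measure (Fin m → Fin d → ℝ) :=
  Measure.pi fun _ => gaussPi d
instance (m d : ℕ) : IsProbabilityMeasure (gaussMat m d) := by unfold gaussMat; infer_instance

noncomputable def Zfun (m d : ℕ) (u : Fin d → ℝ) (ω : Fin m → Fin d → ℝ) : ℝ :=
  ∑ i, (∑ j, u j * ω i j)^2

lemma mgf_Z (m d : ℕ) (t : ℝ) (u : Fin d → ℝ) (h : 2*t*(∑ j, u j^2) < 1) :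
    Integrable (fun ω => rexp (t * Zfun m d u ω)) (gaussMat m d) ∧
    ∫ ω, rexp (t * Zfun m d u ω) ∂(gaussMat m d)
      = (1 / Real.sqrt (1-2*t*(∑ j, u j^2)))^m := by
  have hF := gauss_pi_quad d t u h 0
  have hexp : ∀ ω : Fin m → Fin d → ℝ, rexp (t * Zfun m d u ω)
      = ∏ i, rexp (t*((0:ℝ) + ∑ j, u j * ω i j)^2) := by
    intro ω
    rw [Zfun, Finset.mul_sum, Real.exp_sum]
    congr 1
    ext i
    rw [zero_add]
  have hmain := pi_prod_integral (gaussPi d) m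
    (fun x : Fin d → ℝ => rexp (t*((0:ℝ) + ∑ j, u j * x j)^2)) hF.1
  constructor
  · have : (fun ω : Fin m → Fin d → ℝ => rexp (t * Zfun m d u ω))
        = fun ω => ∏ i, rexp (t*((0:ℝ) + ∑ j, u j * ω i j)^2) :=
      funext hexp
    rw [this]
    exact hmain.1
  · have h1 : (∫ ω, rexp (t * Zfun m d u ω) ∂(gaussMat m d))
        = ∫ ω : Fin m → Fin d → ℝ,
            ∏ i, rexp (t*((0:ℝ) + ∑ j, u j * ω i j)^2)
          ∂(gaussMat m d) := by
      congr 1; ext ω; exact hexp ω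
    rw [h1]
    rw [gaussMat, hmain.2, hF.2]
    norm_num

lemma log_one_add_le {ε : ℝ} (h0 : 0 ≤ ε) (h1 : ε ≤ 1) :
    Real.log (1+ε) ≤ ε - ε^2/8 := by
  rw [Real.log_le_iff_le_exp (by linarith)]
  obtain ⟨y, hy⟩ : ∃ y, y = ε - ε^2/8 := ⟨_, rfl⟩
  have hy0 : 0 ≤ y := by nlinarith [hy, mul_le_mul_of_nonneg_left h1 h0, pow_two ε]
  have h2 : (1 + y/2)^2 ≤ rexp (y/2)^2 := by
    apply pow_le_pow_left₀ (by nlinarith [hy, mul_le_mul_of_nonneg_left h1 h0, pow_two ε])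
    linarith [Real.add_one_le_exp (y/2)]
  have h3 : rexp (y/2)^2 = rexp y := by
    rw [sq, ← Real.exp_add]
    ring_nf
  have h4 : 1 + ε ≤ (1 + y/2)^2 := by nlinarith [hy, sq_nonneg ε, sq_nonneg (ε*(8-ε))]
  subst hy
  linarith [h2, h4, h3 ▸ h2]

lemma log_one_sub_le {ε : ℝ} (h0 : 0 ≤ ε) (h1 : ε < 1) :
    Real.log (1-ε) ≤ -ε - ε^2/8 := by
  rw [Real.log_le_iff_le_exp (by linarith)]
  obtain ⟨z, hz⟩ : ∃ z, z = ε + ε^2/8 := ⟨_, rfl⟩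
  have hz2 : z ≤ 2 := by nlinarith [hz, mul_le_mul_of_nonneg_left h1.le h0, pow_two ε]
  have h2 : (1 - z/2)^2 ≤ rexp (-z/2)^2 := by
    apply pow_le_pow_left₀ (by nlinarith [hz, mul_le_mul_of_nonneg_left h1.le h0, pow_two ε])
    linarith [Real.add_one_le_exp (-z/2)]
  have h3 : rexp (-z/2)^2 = rexp (-ε - ε^2/8) := by
    rw [sq, ← Real.exp_add, hz]
    ring_nf
  have h4 : 1 - ε ≤ (1 - z/2)^2 := by nlinarith [hz, sq_nonneg ε, sq_nonneg (ε*(8+ε))]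
  subst hz
  linarith [h4, h3 ▸ h2]

lemma tail_up (m d : ℕ) (u : Fin d → ℝ) (hu : (∑ j, u j^2) = 1) {ε : ℝ}
    (h0 : 0 < ε) (h1 : ε < 1) :
    (gaussMat m d {ω | (1+ε)*m ≤ Zfun m d u ω}).toReal ≤ rexp (-(m*ε^2/16)) := by
  have h1e : (0:ℝ) < 1 + ε := by linarith
  obtain ⟨t, ht⟩ : ∃ t, t = ε/(2*(1+ε)) := ⟨_, rfl⟩
  have ht0 : 0 ≤ t := by rw [ht]; positivity
  have h2t : 2*t*(∑ j, u j^2) < 1 := by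
    rw [hu, mul_one, ht]
    rw [show 2*(ε/(2*(1+ε))) = ε/(1+ε) by field_simp]
    rw [div_lt_one h1e]; linarith
  have hZ := mgf_Z m d t u h2t
  have hb := measure_ge_le_exp_mul_mgf (μ := gaussMat m d) (X := Zfun m d u)
    ((1+ε)*m) ht0 hZ.1
  have hmgf : mgf (Zfun m d u) (gaussMat m d) t = (1 / Real.sqrt (1-2*t))^m := by
    have := hZ.2
    rw [hu, mul_one] at this
    exact this
  rw [hmgf] at hb
  have h2tval : 1 - 2*t = (1+ε)⁻¹ := by rw [ht]; field_simp; ring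
  have hsq : (1:ℝ)/Real.sqrt (1-2*t) = Real.sqrt (1+ε) := by
    rw [h2tval, Real.sqrt_inv, one_div, inv_inv]
  have hse : Real.sqrt (1+ε) = rexp (Real.log (1+ε)/2) := by
    rw [← Real.log_sqrt h1e.le, Real.exp_log (Real.sqrt_pos.mpr h1e)]
  rw [hsq, hse, ← Real.exp_nat_mul, ← Real.exp_add] at hb
  refine hb.trans (Real.exp_le_exp.mpr ?_)
  have hte : t*(1+ε) = ε/2 := by rw [ht]; field_simp
  have hlog := log_one_add_le h0.le h1.le
  have hm0 : (0:ℝ) ≤ m := Nat.cast_nonneg m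
  have := mul_le_mul_of_nonneg_left hlog hm0
  nlinarith [this, hte, hm0]

lemma tail_down (m d : ℕ) (u : Fin d → ℝ) (hu : (∑ j, u j^2) = 1) {ε : ℝ}
    (h0 : 0 < ε) (h1 : ε < 1) :
    (gaussMat m d {ω | Zfun m d u ω ≤ (1-ε)*m}).toReal ≤ rexp (-(m*ε^2/16)) := by
  have h1e : (0:ℝ) < 1 - ε := by linarith
  obtain ⟨t, ht⟩ : ∃ t, t = -(ε/(2*(1-ε))) := ⟨_, rfl⟩
  have ht0 : t ≤ 0 := by rw [ht]; simp; positivity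
  have h2t : 2*t*(∑ j, u j^2) < 1 := by
    rw [hu, mul_one]
    have : 2*t ≤ 0 := by linarith
    linarith
  have hZ := mgf_Z m d t u h2t
  have hb := measure_le_le_exp_mul_mgf (μ := gaussMat m d) (X := Zfun m d u)
    ((1-ε)*m) ht0 hZ.1
  have hmgf : mgf (Zfun m d u) (gaussMat m d) t = (1 / Real.sqrt (1-2*t))^m := by
    have := hZ.2
    rw [hu, mul_one] at this
    exact this
  rw [hmgf] at hb
  have h2tval : 1 - 2*t = (1-ε)⁻¹ := by rw [ht]; field_simp; ring
  have hsq : (1:ℝ)/Real.sqrt (1-2*t) = Real.sqrt (1-ε) := by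
    rw [h2tval, Real.sqrt_inv, one_div, inv_inv]
  have hse : Real.sqrt (1-ε) = rexp (Real.log (1-ε)/2) := by
    rw [← Real.log_sqrt h1e.le, Real.exp_log (Real.sqrt_pos.mpr h1e)]
  rw [hsq, hse, ← Real.exp_nat_mul, ← Real.exp_add] at hb
  refine hb.trans (Real.exp_le_exp.mpr ?_)
  have hte : t*(1-ε) = -(ε/2) := by rw [ht]; field_simp
  have hlog := log_one_sub_le h0.le h1
  have hm0 : (0:ℝ) ≤ m := Nat.cast_nonneg m
  have := mul_le_mul_of_nonneg_left hlog hm0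
  nlinarith [this, hte, hm0]

lemma euclid_norm_sq {n : ℕ} (x : EuclideanSpace ℝ (Fin n)) : ‖x‖^2 = ∑ i, x i ^ 2 := by
  rw [EuclideanSpace.norm_eq, Real.sq_sqrt (Finset.sum_nonneg fun i _ => sq_nonneg _)]
  congr 1
  ext i
  rw [Real.norm_eq_abs, sq_abs]

lemma toEuclideanLin_norm_sq {m n : ℕ} (S : Matrix (Fin m) (Fin n) ℝ)
    (v : EuclideanSpace ℝ (Fin n)) :
    ‖Matrix.toEuclideanLin S v‖^2 = ∑ i, (∑ j, S i j * v j)^2 := by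
  rw [euclid_norm_sq]
  refine Finset.sum_congr rfl fun i _ => ?_
  congr 1

set_option maxHeartbeats 1000000 in
/-- Johnson–Lindenstrauss lemma (Lemma 1): there is an absolute constant `c > 0` such
that for every dimension `d ≥ 1`, every finite set `𝒳 ⊂ ℝᵈ` of cardinality `p ≥ 1`,
every `ε ∈ (0,1)` and every integer `m ≥ c · log p / ε²`, there exists a matrix
`S ∈ ℝ^{m×d}` that preserves all pairwise squared distances of `𝒳` up to `1 ± ε`. -/
theorem johnson_lindenstrauss :
    ∃ c : ℝ, 0 < c ∧
      ∀ (d : ℕ), 1 ≤ d →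
        ∀ (𝒳 : Finset (EuclideanSpace ℝ (Fin d))), 1 ≤ 𝒳.card →
          ∀ ε : ℝ, ε ∈ Set.Ioo (0 : ℝ) 1 →
            ∀ m : ℕ, c * Real.log (𝒳.card) / ε ^ 2 ≤ (m : ℝ) →
              ∃ S : Matrix (Fin m) (Fin d) ℝ,
                ∀ y ∈ 𝒳, ∀ z ∈ 𝒳,
                  (1 - ε) * ‖y - z‖ ^ 2 ≤ ‖Matrix.toEuclideanLin S (y - z)‖ ^ 2 ∧
                  ‖Matrix.toEuclideanLin S (y - z)‖ ^ 2 ≤ (1 + ε) * ‖y - z‖ ^ 2 := by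
  classical
  refine ⟨64, by norm_num, ?_⟩
  intro d hd 𝒳 hcard ε hε m hm
  obtain ⟨hε0, hε1⟩ := hε
  by_cases hp1 : 𝒳.card ≤ 1
  · -- all points equal
    refine ⟨0, ?_⟩
    intro y hy z hz
    have hyz : y = z := Finset.card_le_one.mp hp1 y hy z hz
    subst hyz
    simp only [sub_self, map_zero, norm_zero]
    norm_num
  -- now 𝒳.card ≥ 2
  push_neg at hp1
  have hp2 : 2 ≤ 𝒳.card := hp1
  obtain ⟨p, hpdef⟩ : ∃ p : ℝ, p = (𝒳.card : ℝ) := ⟨_, rfl⟩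
  have hp2' : (2:ℝ) ≤ p := by rw [hpdef]; exact_mod_cast hp2
  have hlogp : 0 < Real.log p := Real.log_pos (by linarith)
  have hε2 : 0 < ε^2 := by positivity
  have hmR : 64 * Real.log p / ε^2 ≤ (m:ℝ) := by rw [hpdef]; exact hm
  have hm0 : 0 < (m:ℝ) := by
    have h1 : 0 < 64 * Real.log p / ε^2 := by positivity
    linarith
  have hmain : 4 * Real.log p ≤ (m:ℝ)*ε^2/16 := by
    have h1 : 64 * Real.log p ≤ (m:ℝ) * ε^2 := by
      rw [div_le_iff₀ hε2] at hmR
      linarith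
    linarith
  obtain ⟨δ, hδdef⟩ : ∃ δ : ℝ, δ = rexp (-((m:ℝ)*ε^2/16)) := ⟨_, rfl⟩
  have hδpos : 0 < δ := hδdef ▸ Real.exp_pos _
  have hδle : δ ≤ (p^4)⁻¹ := by
    rw [hδdef]
    have : rexp (-((m:ℝ)*ε^2/16)) ≤ rexp (-(4*Real.log p)) :=
      Real.exp_le_exp.mpr (by linarith)
    refine this.trans ?_
    rw [Real.exp_neg]
    rw [show (4:ℝ)*Real.log p = Real.log p * 4 by ring]
    rw [show Real.log p * 4 = ((4:ℕ):ℝ) * Real.log p by push_cast; ring]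
    rw [Real.exp_nat_mul, Real.exp_log (by linarith)]
  -- unit direction
  have hunit : ∀ v : EuclideanSpace ℝ (Fin d), v ≠ 0 →
      (∑ j, (v j / ‖v‖)^2) = 1 := by
    intro v hv
    have hnv : 0 < ‖v‖ := norm_pos_iff.mpr hv
    have : (∑ j, (v j / ‖v‖)^2) = (∑ j, v j^2) / ‖v‖^2 := by
      rw [Finset.sum_div]
      congr 1; ext j; rw [div_pow]
    rw [this, ← euclid_norm_sq v, div_self (by positivity)]
  -- bad events
  obtain ⟨B, hBdef⟩ : ∃ B : (EuclideanSpace ℝ (Fin d) × EuclideanSpace ℝ (Fin d)) →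
      Set (Fin m → Fin d → ℝ), B =
    fun q => if q.1 = q.2 then (∅ : Set _) else
      {ω | (1+ε)*m ≤ Zfun m d (fun j => (q.1 - q.2) j / ‖q.1 - q.2‖) ω} ∪
      {ω | Zfun m d (fun j => (q.1 - q.2) j / ‖q.1 - q.2‖) ω ≤ (1-ε)*m} := ⟨_, rfl⟩
  have hB : ∀ q, gaussMat m d (B q) ≤ ENNReal.ofReal (2*δ) := by
    intro q
    rw [hBdef]
    by_cases hq : q.1 = q.2
    · simp [hq]
    · simp only [if_neg hq]
      refine (measure_union_le _ _).trans ?_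
      have hu := hunit (q.1 - q.2) (sub_ne_zero.mpr hq)
      have h1 := tail_up m d _ hu hε0 hε1
      have h2 := tail_down m d _ hu hε0 hε1
      have e1 : gaussMat m d {ω | (1+ε)*m ≤ Zfun m d (fun j => (q.1 - q.2) j / ‖q.1 - q.2‖) ω}
          ≤ ENNReal.ofReal δ := by
        rw [← ENNReal.ofReal_toReal (measure_ne_top (gaussMat m d) _), hδdef]
        exact ENNReal.ofReal_le_ofReal h1
      have e2 : gaussMat m d {ω | Zfun m d (fun j => (q.1 - q.2) j / ‖q.1 - q.2‖) ω ≤ (1-ε)*m}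
          ≤ ENNReal.ofReal δ := by
        rw [← ENNReal.ofReal_toReal (measure_ne_top (gaussMat m d) _), hδdef]
        exact ENNReal.ofReal_le_ofReal h2
      calc _ ≤ ENNReal.ofReal δ + ENNReal.ofReal δ := add_le_add e1 e2
        _ = ENNReal.ofReal (2*δ) := by
            rw [← ENNReal.ofReal_add hδpos.le hδpos.le]; congr 1; ring
  -- union bound
  have hT : gaussMat m d (⋃ q ∈ (𝒳 ×ˢ 𝒳 : Finset _), B q) < 1 := by
    refine lt_of_le_of_lt (measure_biUnion_finset_le _ _) ?_
    have hsum : ∑ q ∈ (𝒳 ×ˢ 𝒳 : Finset _), gaussMat m d (B q)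
        ≤ (𝒳 ×ˢ 𝒳 : Finset _).card • ENNReal.ofReal (2*δ) :=
      Finset.sum_le_card_nsmul _ _ _ (fun q _ => hB q)
    refine lt_of_le_of_lt hsum ?_
    rw [nsmul_eq_mul, Finset.card_product]
    rw [show ((𝒳.card * 𝒳.card : ℕ) : ℝ≥0∞) = ENNReal.ofReal ((𝒳.card * 𝒳.card : ℕ) : ℝ) by
      rw [ENNReal.ofReal_natCast]]
    rw [← ENNReal.ofReal_mul (by positivity)]
    refine lt_of_le_of_lt (ENNReal.ofReal_le_ofReal ?_) (by norm_num : ENNReal.ofReal (1/2) < 1)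
    push_cast
    have hp4 : δ * p^4 ≤ 1 := by
      calc δ * p^4 ≤ (p^4)⁻¹ * p^4 :=
            mul_le_mul_of_nonneg_right hδle (by positivity)
        _ = 1 := inv_mul_cancel₀ (by positivity)
    rw [← hpdef]
    have h4pp : (4:ℝ) ≤ p*p := by nlinarith [hp2']
    have h44 : 4*(p*p) ≤ p^4 := by
      nlinarith [mul_le_mul_of_nonneg_left h4pp (by positivity : (0:ℝ) ≤ p*p)]
    nlinarith [mul_le_mul_of_nonneg_right h44 hδpos.le, hp4, hδpos.le]
  -- pick a good ω
  have hne : (⋃ q ∈ (𝒳 ×ˢ 𝒳 : Finset _), B q) ≠ Set.univ := by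
    intro hA
    rw [hA] at hT
    simp at hT
  obtain ⟨ω, hω⟩ : ∃ ω, ω ∉ ⋃ q ∈ (𝒳 ×ˢ 𝒳 : Finset _), B q := by
    by_contra hcon
    push_neg at hcon
    exact hne (Set.eq_univ_iff_forall.mpr hcon)
  -- define the matrix
  refine ⟨Matrix.of (fun i j => ω i j / Real.sqrt m), ?_⟩
  intro y hy z hz
  by_cases hyz : y = z
  · subst hyz
    rw [sub_self, map_zero, norm_zero]
    norm_num
  · have hqmem : (y, z) ∈ (𝒳 ×ˢ 𝒳 : Finset _) := Finset.mem_product.mpr ⟨hy, hz⟩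
    have hωq : ω ∉ B (y, z) := by
      intro hin
      exact hω (Set.mem_biUnion hqmem hin)
    rw [hBdef] at hωq
    simp only [if_neg hyz] at hωq
    simp only [Set.mem_union, Set.mem_setOf_eq] at hωq
    push_neg at hωq
    obtain ⟨hlt1, hlt2⟩ := hωq
    have hnv : 0 < ‖y - z‖ := norm_pos_iff.mpr (sub_ne_zero.mpr hyz)
    have hsm : Real.sqrt (m:ℝ) ≠ 0 := by positivity
    have key : ‖Matrix.toEuclideanLin (Matrix.of (fun i j => ω i j / Real.sqrt m)) (y - z)‖^2
        = ‖y - z‖^2/(m:ℝ) * Zfun m d (fun j => (y - z) j / ‖y - z‖) ω := by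
      rw [toEuclideanLin_norm_sq, Zfun, Finset.mul_sum]
      congr 1
      ext i
      have hrow : (∑ j, (Matrix.of (fun i j => ω i j / Real.sqrt m)) i j * (y - z) j)
          = (‖y - z‖/Real.sqrt m) * ∑ j, ((y - z) j / ‖y - z‖) * ω i j := by
        rw [Finset.mul_sum]
        congr 1
        ext j
        show (ω i j / Real.sqrt m) * (y - z) j
            = (‖y - z‖/Real.sqrt m) * ((y - z) j / ‖y - z‖ * ω i j)
        field_simp
        
      rw [hrow, mul_pow, div_pow, Real.sq_sqrt hm0.le]
    have hfactor : 0 ≤ ‖y - z‖^2/(m:ℝ) := by positivity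
    have hid1 : ‖y - z‖^2/(m:ℝ) * ((1-ε)*m) = (1-ε)*‖y - z‖^2 := by
      field_simp
      
    have hid2 : ‖y - z‖^2/(m:ℝ) * ((1+ε)*m) = (1+ε)*‖y - z‖^2 := by
      field_simp
      
    constructor
    · rw [key, ← hid1]
      exact mul_le_mul_of_nonneg_left hlt2.le hfactor
    · rw [key, ← hid2]
      exact mul_le_mul_of_nonneg_left hlt1.le hfactor
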